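/- If 0 < c < c* (so that μ = 1/(1−cM) > 0), then E₀ = μ · ∫₁^X f(z;μ,λ,1/2) dz; and if c > c* (so that μ̃ = 1/(cM−1) > 0), then E₀ = μ̃ · exp(−2λ/μ̃) · ∫₁^X f(z;μ̃,λ,1/2) dz. -/

import Mathlib

open MeasureTheory Real

/-- P.d.f. of the normal distribution with mean `m` and variance `s2`. -/
noncomputable def normalPdf (m s2 x : ℝ) : ℝ :=
  (Real.sqrt (2 * Real.pi * s2))⁻¹ * Real.exp (-(x - m) ^ 2 / (2 * s2))

/-- The elementary component
`E_k = ∫₀^{c(t−v)/(u+cv)} (1+x)^{−k} φ_{cM(1+x), c²D²(1+x)/(u+cv)}(x) dx`. -/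
noncomputable def elemComp (u c v t M D : ℝ) (k : ℕ) : ℝ :=
  ∫ x in (0:ℝ)..(c * (t - v) / (u + c * v)),
    ((1 + x) ^ k)⁻¹ *
      normalPdf (c * M * (1 + x)) (c ^ 2 * D ^ 2 * (1 + x) / (u + c * v)) x

/-- The exponential factor `E(z; μ, λ) = exp(−λ(z−μ)²/(2μ²z))`. -/
noncomputable def gigE (z μ lam : ℝ) : ℝ :=
  Real.exp (-(lam * (z - μ) ^ 2) / (2 * μ ^ 2 * z))

/-- Generalized inverse Gaussian density with `p = 1/2`. -/
noncomputable def gigPdfHalf (μ lam z : ℝ) : ℝ :=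
  Real.sqrt lam / (μ * Real.sqrt (2 * Real.pi)) * z ^ (-(1:ℝ)/2) * gigE z μ lam

/-- Generalized inverse Gaussian density with `p = −1/2`. -/
noncomputable def gigPdfNegHalf (μ lam z : ℝ) : ℝ :=
  Real.sqrt lam / Real.sqrt (2 * Real.pi) * z ^ (-(3:ℝ)/2) * gigE z μ lam

/-- Generalized inverse Gaussian density with `p = −3/2`. -/
noncomputable def gigPdfNeg3Half (μ lam z : ℝ) : ℝ :=
  lam ^ ((3:ℝ)/2) * μ / (Real.sqrt (2 * Real.pi) * (lam + μ)) * z ^ (-(5:ℝ)/2) * gigE z μ lam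

/-- Generalized inverse Gaussian density with `p = −5/2`. -/
noncomputable def gigPdfNeg5Half (μ lam z : ℝ) : ℝ :=
  lam ^ ((5:ℝ)/2) * μ ^ 2 / (Real.sqrt (2 * Real.pi) * (lam ^ 2 + 3 * lam * μ + 3 * μ ^ 2))
    * z ^ (-(7:ℝ)/2) * gigE z μ lam

/-!
After the shift `z = 1 + x` the integrand of `E₀` is the normal density with mean `cMz` and
variance `z/λ` evaluated at `z - 1`. Its exponent is `-λ((1 - cM)z - 1)² / (2z)`, and
`((1 - cM)z - 1)² = (z - μ)² / μ²` for `μ = 1/(1 - cM)`, which is the generalized inverse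
Gaussian exponent. When `cM > 1` the same computation runs with `μ = -μ̃ < 0`, and
`(z + μ̃)² = (z - μ̃)² + 4μ̃z` splits off the constant factor `exp(-2λ/μ̃)`.
-/

lemma gigE_neg {z μ : ℝ} (lam : ℝ) (hz : z ≠ 0) (hμ : μ ≠ 0) :
    gigE z (-μ) lam = exp (-2 * lam / μ) * gigE z μ lam := by
  unfold gigE
  rw [← exp_add]
  congr 1
  field_simp
  ring

lemma gigPdfHalf_neg {z μ : ℝ} (lam : ℝ) (hz : z ≠ 0) (hμ : μ ≠ 0) :
    gigPdfHalf (-μ) lam z = -(exp (-2 * lam / μ) * gigPdfHalf μ lam z) := by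
  unfold gigPdfHalf
  rw [gigE_neg lam hz hμ]
  ring

lemma normalPdf_eq_mul_gigPdfHalf {a z lam : ℝ} (hz : 0 < z) (hlam : 0 < lam) (ha : a ≠ 1) :
    normalPdf (a * z) (z / lam) (z - 1)
      = 1 / (1 - a) * gigPdfHalf (1 / (1 - a)) lam z := by
  have ha' : 1 - a ≠ 0 := sub_ne_zero.mpr ha.symm
  have hsqrt : sqrt (2 * π * (z / lam)) = sqrt (2 * π) * sqrt z / sqrt lam := by
    rw [sqrt_mul (by positivity), sqrt_div hz.le]
    ring
  have hrpow : z ^ (-(1:ℝ) / 2) = (sqrt z)⁻¹ := by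
    rw [neg_div, rpow_neg hz.le, ← sqrt_eq_rpow]
  have hexp : -(z - 1 - a * z) ^ 2 / (2 * (z / lam))
      = -(lam * (z - 1 / (1 - a)) ^ 2) / (2 * (1 / (1 - a)) ^ 2 * z) := by
    field_simp
    ring
  have hsz : 0 < sqrt z := sqrt_pos.mpr hz
  have hsl : 0 < sqrt lam := sqrt_pos.mpr hlam
  unfold normalPdf gigPdfHalf gigE
  rw [hsqrt, hrpow, hexp]
  field_simp

lemma normalPdf_eq_mul_exp_mul_gigPdfHalf {a z lam : ℝ} (hz : 0 < z) (hlam : 0 < lam)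
    (ha : a ≠ 1) :
    normalPdf (a * z) (z / lam) (z - 1)
      = 1 / (a - 1) * exp (-2 * lam / (1 / (a - 1))) * gigPdfHalf (1 / (a - 1)) lam z := by
  have hμ : 1 / (a - 1) ≠ 0 := one_div_ne_zero (sub_ne_zero.mpr ha)
  have hneg : 1 / (1 - a) = -(1 / (a - 1)) := by rw [← neg_sub, div_neg]
  rw [normalPdf_eq_mul_gigPdfHalf hz hlam ha, hneg, gigPdfHalf_neg lam hz.ne' hμ]
  ring

lemma elemComp_zero_eq_integral_normalPdf (u c v t M D : ℝ) :
    elemComp u c v t M D 0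
      = ∫ z in (1:ℝ)..(c * (t - v) / (u + c * v) + 1),
          normalPdf (c * M * z) (z / ((u + c * v) / (c ^ 2 * D ^ 2))) (z - 1) := by
  have hshift := intervalIntegral.integral_comp_add_right (a := 0)
    (b := c * (t - v) / (u + c * v))
    (fun z => normalPdf (c * M * z) (z / ((u + c * v) / (c ^ 2 * D ^ 2))) (z - 1)) 1
  rw [zero_add] at hshift
  rw [elemComp, ← hshift]
  refine intervalIntegral.integral_congr fun x _ => ?_
  rw [pow_zero, inv_one, one_mul, add_sub_cancel_right, div_div_eq_mul_div, add_comm x 1,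
    mul_comm (1 + x)]

/-- Theorem on `E₀` in terms of the generalized inverse Gaussian c.d.f. with `p = 1/2`. -/
theorem elemComp_zero_eq (u c v t M D : ℝ)
    (hu : 0 < u) (hc : 0 < c) (hv : 0 ≤ v) (ht : v < t) (hM : 0 < M) (hD : 0 < D) :
    (c < 1 / M →
      elemComp u c v t M D 0
        = (1 / (1 - c * M)) *
            ∫ z in (1:ℝ)..(c * (t - v) / (u + c * v) + 1),
              gigPdfHalf (1 / (1 - c * M)) ((u + c * v) / (c ^ 2 * D ^ 2)) z)
    ∧ (1 / M < c →
      elemComp u c v t M D 0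
        = (1 / (c * M - 1)) *
            Real.exp (-2 * ((u + c * v) / (c ^ 2 * D ^ 2)) / (1 / (c * M - 1))) *
            ∫ z in (1:ℝ)..(c * (t - v) / (u + c * v) + 1),
              gigPdfHalf (1 / (c * M - 1)) ((u + c * v) / (c ^ 2 * D ^ 2)) z) := by
  have hucv : 0 < u + c * v := by positivity
  have hlam : 0 < (u + c * v) / (c ^ 2 * D ^ 2) := by positivity
  have hL : 0 ≤ c * (t - v) / (u + c * v) := div_nonneg (mul_nonneg hc.le (by linarith)) hucv.le
  have hz : ∀ z ∈ Set.uIcc 1 (c * (t - v) / (u + c * v) + 1), 0 < z := fun z hzI => by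
    rw [Set.uIcc_of_le (by linarith)] at hzI
    linarith [hzI.1]
  rw [elemComp_zero_eq_integral_normalPdf]
  constructor
  · intro h
    have hcM : c * M ≠ 1 := ((lt_div_iff₀ hM).mp h).ne
    rw [← intervalIntegral.integral_const_mul]
    exact intervalIntegral.integral_congr fun z hzI =>
      normalPdf_eq_mul_gigPdfHalf (hz z hzI) hlam hcM
  · intro h
    have hcM : c * M ≠ 1 := ((div_lt_iff₀ hM).mp h).ne'
    rw [← intervalIntegral.integral_const_mul]
    exact intervalIntegral.integral_congr fun z hzI =>
      normalPdf_eq_mul_exp_mul_gigPdfHalf (hz z hzI) hlam hcM
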